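/- The function f₀ of the explicit piecewise linear construction is integrable on [0,∞) with 0 < ∫_0^∞ f₀(y) dy < ∞; consequently f = f₀ / ∫_0^∞ f₀(y) dy (extended by 0 on (−∞,0)) is a probability density supported on [0,∞). -/

import Mathlib

open MeasureTheory Filter Set

noncomputable section

/-- `a_n = 2^(n²)`. -/
def aSeq (n : ℕ) : ℝ := 2 ^ (n ^ 2)

/-- `m_n` : the least positive integer `k` with `k ≥ (√5/√6)·n`. -/
def mIdx (n : ℕ) : ℕ := max 1 ⌈(Real.sqrt 5 / Real.sqrt 6) * (n : ℝ)⌉₊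

/-- `b_n = a_n + a_{m_n}·(ln (n+1))²`. -/
def bSeq (n : ℕ) : ℝ := aSeq n + aSeq (mIdx n) * (Real.log ((n : ℝ) + 1)) ^ 2

/-- `c_n = (a_{n+1} + b_n)/2`. -/
def cSeq (n : ℕ) : ℝ := (aSeq (n + 1) + bSeq n) / 2

/-- `f` is affine (the linear interpolation of its endpoint values) on `[p, q]`. -/
def AffineOnIcc (f : ℝ → ℝ) (p q : ℝ) : Prop :=
  ∀ x ∈ Set.Icc p q, f x = f p + (x - p) / (q - p) * (f q - f p)

/-- The explicit continuous piecewise linear construction `f₀ : [0,∞) → (0,∞)`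
with `f₀(0) = 1`, `f₀(a_n) = 2 a_n⁻³`, `f₀(b_n) = 2 a_n⁻³ / ln(n+1)`,
`f₀(c_n) = 2 a_n⁻³`, affine on `[0,a₁]`, `[a_n,b_n]`, `[b_n,c_n]`, `[c_n,a_{n+1}]`. -/
def PWConstruction (f₀ : ℝ → ℝ) : Prop :=
  ContinuousOn f₀ (Set.Ici 0) ∧
  (∀ x : ℝ, 0 ≤ x → 0 < f₀ x) ∧
  f₀ 0 = 1 ∧
  (∀ n : ℕ, 1 ≤ n →
    f₀ (aSeq n) = 2 / (aSeq n) ^ 3 ∧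
    f₀ (bSeq n) = 2 / (aSeq n) ^ 3 / Real.log ((n : ℝ) + 1) ∧
    f₀ (cSeq n) = 2 / (aSeq n) ^ 3) ∧
  AffineOnIcc f₀ 0 (aSeq 1) ∧
  (∀ n : ℕ, 1 ≤ n →
    AffineOnIcc f₀ (aSeq n) (bSeq n) ∧
    AffineOnIcc f₀ (bSeq n) (cSeq n) ∧
    AffineOnIcc f₀ (cSeq n) (aSeq (n + 1)))

/-- The normalized extension `f = f₀ / ∫₀^∞ f₀(y) dy`, extended by `0` on `(-∞,0)`. -/
def normExt (f₀ : ℝ → ℝ) : ℝ → ℝ :=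
  fun x => if x < 0 then 0 else f₀ x / ∫ y in Set.Ici (0:ℝ), f₀ y

/-- A probability density supported on `[0, ∞)`. -/
def IsDensity (f : ℝ → ℝ) : Prop :=
  Measurable f ∧ (∀ x < (0:ℝ), f x = 0) ∧ (∀ x : ℝ, 0 ≤ f x) ∧
    ∫ y in Set.Ioi (0:ℝ), f y = 1

/-!
On a block `[a_n, a_{n+1}]` the function `f₀` is affine between nodes at which it is at
most `3 a_n⁻³` (because `ln (n+1) ≥ ln 2 > 2/3`), hence `f₀ ≤ 3 a_n⁻³` on the whole block.
Since `a_{n+1}² = 2^(2n² + 4n + 2) ≤ 64 · 2^(3n²) = 64 a_n³`, this gives `f₀ x ≤ 192 / x²`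
for `x ≥ a_1 = 2`, so `f₀` is integrable; positivity and continuity of `f₀` do the rest.
-/

open Real

theorem AffineOnIcc.le_of_le {f : ℝ → ℝ} {p q M x : ℝ} (h : AffineOnIcc f p q)
    (hp : f p ≤ M) (hq : f q ≤ M) (hx : x ∈ Icc p q) : f x ≤ M := by
  have ht₀ : 0 ≤ (x - p) / (q - p) :=
    div_nonneg (by linarith [hx.1]) (by linarith [hx.1, hx.2])
  have ht₁ : (x - p) / (q - p) ≤ 1 :=
    div_le_one_of_le₀ (by linarith [hx.2]) (by linarith [hx.1, hx.2])
  rw [h x hx]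
  nlinarith

theorem exists_le_lt_succ_of_tendsto_atTop {α : Type*} [LinearOrder α] [NoMaxOrder α]
    {u : ℕ → α} (hu : Tendsto u atTop atTop) {k : ℕ} {x : α} (hx : u k ≤ x) :
    ∃ n, k ≤ n ∧ u n ≤ x ∧ x < u (n + 1) := by
  by_contra! h
  have hle : ∀ n, k ≤ n → u n ≤ x := fun n hn =>
    Nat.le_induction hx (fun m hm ihm => h m hm ihm) n hn
  obtain ⟨n, hxn, hkn⟩ := ((hu.eventually_gt_atTop x).and (eventually_ge_atTop k)).exists
  exact (hle n hkn).not_gt hxn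

theorem aSeq_pos (n : ℕ) : 0 < aSeq n := by
  unfold aSeq; positivity

theorem aSeq_le_aSeq_succ (n : ℕ) : aSeq n ≤ aSeq (n + 1) :=
  pow_le_pow_right₀ one_le_two (Nat.pow_le_pow_left n.le_succ 2)

theorem tendsto_aSeq_atTop : Tendsto aSeq atTop atTop :=
  (tendsto_pow_atTop_atTop_of_one_lt one_lt_two).comp (tendsto_pow_atTop two_ne_zero)

theorem aSeq_succ_sq_le (n : ℕ) : aSeq (n + 1) ^ 2 ≤ 64 * aSeq n ^ 3 := by
  have hexp : (n + 1) ^ 2 * 2 ≤ 6 + n ^ 2 * 3 := by nlinarith [sq_nonneg ((n : ℤ) - 2)]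
  calc aSeq (n + 1) ^ 2 = (2 : ℝ) ^ ((n + 1) ^ 2 * 2) := by rw [aSeq, ← pow_mul]
    _ ≤ 2 ^ (6 + n ^ 2 * 3) := pow_le_pow_right₀ one_le_two hexp
    _ = 64 * aSeq n ^ 3 := by rw [aSeq, pow_add, pow_mul]; norm_num

namespace PWConstruction

variable {f₀ : ℝ → ℝ}

theorem le_on_block (hf : PWConstruction f₀) {n : ℕ} (hn : 1 ≤ n) {x : ℝ}
    (hx : x ∈ Icc (aSeq n) (aSeq (n + 1))) : f₀ x ≤ 3 / aSeq n ^ 3 := by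
  obtain ⟨-, -, -, hnodes, -, hpieces⟩ := hf
  obtain ⟨ha, hb, hc⟩ := hnodes n hn
  obtain ⟨hab, hbc, hca⟩ := hpieces n hn
  have hA : 0 < aSeq n ^ 3 := pow_pos (aSeq_pos n) 3
  have h2 : 2 / aSeq n ^ 3 ≤ 3 / aSeq n ^ 3 := by gcongr; norm_num
  have hlog : 2 / 3 < log ((n : ℝ) + 1) :=
    calc (2 / 3 : ℝ) < log 2 := by linarith [log_two_gt_d9]
      _ ≤ log ((n : ℝ) + 1) := log_le_log two_pos (by norm_cast; omega)
  have hfa : f₀ (aSeq n) ≤ 3 / aSeq n ^ 3 := ha ▸ h2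
  have hfb : f₀ (bSeq n) ≤ 3 / aSeq n ^ 3 :=
    calc f₀ (bSeq n) = 2 / aSeq n ^ 3 / log ((n : ℝ) + 1) := hb
      _ ≤ 2 / aSeq n ^ 3 / (2 / 3) :=
          div_le_div_of_nonneg_left (by positivity) (by norm_num) hlog.le
      _ = 3 / aSeq n ^ 3 := by ring
  have hfc : f₀ (cSeq n) ≤ 3 / aSeq n ^ 3 := hc ▸ h2
  have hfa' : f₀ (aSeq (n + 1)) ≤ 3 / aSeq n ^ 3 :=
    calc f₀ (aSeq (n + 1)) = 2 / aSeq (n + 1) ^ 3 := (hnodes (n + 1) (by omega)).1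
      _ ≤ 2 / aSeq n ^ 3 := div_le_div_of_nonneg_left zero_le_two hA
          (pow_le_pow_left₀ (aSeq_pos n).le (aSeq_le_aSeq_succ n) 3)
      _ ≤ 3 / aSeq n ^ 3 := h2
  -- The three pieces cover the block whatever the relative order of `b_n` and `c_n`.
  rcases le_total x (bSeq n) with hxb | hbx
  · exact hab.le_of_le hfa hfb ⟨hx.1, hxb⟩
  rcases le_total x (cSeq n) with hxc | hcx
  · exact hbc.le_of_le hfb hfc ⟨hbx, hxc⟩
  · exact hca.le_of_le hfc hfa' ⟨hcx, hx.2⟩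

theorem le_div_sq (hf : PWConstruction f₀) {x : ℝ} (hx : 2 ≤ x) : f₀ x ≤ 192 / x ^ 2 := by
  obtain ⟨n, hn, hax, hxa⟩ :=
    exists_le_lt_succ_of_tendsto_atTop tendsto_aSeq_atTop (k := 1) (by norm_num [aSeq]; exact hx)
  have hx₀ : 0 < x := by linarith
  calc f₀ x ≤ 3 / aSeq n ^ 3 := hf.le_on_block hn ⟨hax, hxa.le⟩
    _ ≤ 192 / aSeq (n + 1) ^ 2 := by
      rw [div_le_div_iff₀ (pow_pos (aSeq_pos n) 3) (pow_pos (aSeq_pos (n + 1)) 2)]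
      linarith [aSeq_succ_sq_le n]
    _ ≤ 192 / x ^ 2 := by gcongr

theorem isBigO_rpow_neg_two (hf : PWConstruction f₀) :
    f₀ =O[atTop] fun x => x ^ (-2 : ℝ) := by
  refine Asymptotics.IsBigO.of_bound 192 ?_
  filter_upwards [eventually_ge_atTop 2] with x hx
  have hx₀ : 0 < x := by linarith
  rw [norm_of_nonneg (hf.2.1 x hx₀.le).le, norm_of_nonneg (rpow_nonneg hx₀.le _),
    rpow_neg hx₀.le, rpow_two, ← div_eq_mul_inv]
  exact hf.le_div_sq hx

theorem integrableOn_Ici (hf : PWConstruction f₀) : IntegrableOn f₀ (Ici 0) :=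
  (hf.1.locallyIntegrableOn measurableSet_Ici).integrableOn_of_isBigO_atTop
    hf.isBigO_rpow_neg_two (integrableAtFilter_rpow_atTop_iff.mpr (by norm_num))

end PWConstruction

theorem setIntegral_Ici_pos {f : ℝ → ℝ} {a : ℝ} (hint : IntegrableOn f (Ici a))
    (hpos : ∀ x, a ≤ x → 0 < f x) : 0 < ∫ x in Ici a, f x := by
  rw [setIntegral_pos_iff_support_of_nonneg_ae
    (ae_restrict_of_forall_mem measurableSet_Ici fun x hx => (hpos x hx).le) hint,
    inter_eq_right.2 (show Ici a ⊆ Function.support f from fun x hx => (hpos x hx).ne'),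
    Real.volume_Ici]
  exact ENNReal.zero_lt_top

theorem isDensity_normExt {f : ℝ → ℝ} (hcont : ContinuousOn f (Ici 0))
    (hnonneg : ∀ x, 0 ≤ x → 0 ≤ f x) (hI : 0 < ∫ y in Ici (0 : ℝ), f y) :
    IsDensity (normExt f) := by
  refine ⟨?_, fun x hx => if_pos hx, fun x => ?_, ?_⟩
  · have hpiece :
        normExt f = (Iio 0).piecewise (fun _ => 0) fun x => f x / ∫ y in Ici 0, f y := rfl
    rw [hpiece]
    refine continuousOn_const.measurable_piecewise ?_ measurableSet_Iio
    rw [compl_Iio]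
    exact hcont.div_const _
  · unfold normExt
    split_ifs with hx
    · rfl
    · exact div_nonneg (hnonneg x (not_lt.1 hx)) hI.le
  · calc ∫ y in Ioi 0, normExt f y = ∫ y in Ioi 0, f y / ∫ y in Ici 0, f y :=
          setIntegral_congr_fun measurableSet_Ioi fun x hx => if_neg (not_lt.2 hx.le)
      _ = 1 := by rw [integral_div, ← integral_Ici_eq_integral_Ioi, div_self hI.ne']

theorem pw_construction_integrable_and_density (f₀ : ℝ → ℝ)
    (hf₀ : PWConstruction f₀) :
    IntegrableOn f₀ (Set.Ici 0) ∧
    0 < ∫ y in Set.Ici (0:ℝ), f₀ y ∧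
    IsDensity (normExt f₀) := by
  have hint := hf₀.integrableOn_Ici
  obtain ⟨hcont, hpos, -⟩ := hf₀
  have hI := setIntegral_Ici_pos hint hpos
  exact ⟨hint, hI, isDensity_normExt hcont (fun x hx => (hpos x hx).le) hI⟩
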